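/- Let ξ ∈ ℝ and −∞ < ω_min < ω_max < ∞. The kinetic invariant domain D̃_ξ = {f ∈ D : f = 0 or ω_min ≤ ω₁(f,ξ) ≤ ω₂(f,ξ) ≤ ω_max} is a convex subset of ℝ². -/

import Mathlib

open MeasureTheory Real Set

noncomputable section

/-- J_λ = ∫_{-1}^1 (1-z²)^λ dz -/
def Jl (l : ℝ) : ℝ := ∫ z in (-1:ℝ)..1, (1 - z^2) ^ l

/-- θ = (γ-1)/2 -/
def th (γ : ℝ) : ℝ := (γ - 1) / 2

/-- λ = 1/(γ-1) - 1/2 -/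
def lam (γ : ℝ) : ℝ := 1 / (γ - 1) - 1 / 2

/-- a_γ = 2√(γκ)/(γ-1) -/
def ag (γ κ : ℝ) : ℝ := 2 * Real.sqrt (γ * κ) / (γ - 1)

/-- c_{γ,κ} = a_γ^{-2/(γ-1)} / J_λ -/
def cgk (γ κ : ℝ) : ℝ := ag γ κ ^ (-(2 / (γ - 1))) / Jl (lam γ)

/-- χ(ρ,ξ) = c_{γ,κ} (a_γ² ρ^{γ-1} - ξ²)_+^λ -/
def chi (γ κ ρ ξ : ℝ) : ℝ :=
  cgk γ κ * (max (ag γ κ ^ 2 * ρ ^ (γ - 1) - ξ ^ 2) 0) ^ lam γ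

/-- vector-valued Maxwellian -/
def Mx (γ κ ρ u ξ : ℝ) : ℝ × ℝ :=
  (chi γ κ ρ (ξ - u), ((1 - th γ) * u + th γ * ξ) * chi γ κ ρ (ξ - u))

/-- domain D = {f₀ > 0} ∪ {0} -/
def Dset : Set (ℝ × ℝ) := {f | 0 < f.1 ∨ f = 0}

/-- kinetic energy H(f,ξ) -/
def Hk (γ κ : ℝ) (f : ℝ × ℝ) (ξ : ℝ) : ℝ :=
  if f = 0 then 0 else
    th γ / (1 - th γ) * (ξ ^ 2 / 2) * f.1
      + th γ / (2 * cgk γ κ ^ (1 / lam γ)) * (f.1 ^ (1 + 1 / lam γ) / (1 + 1 / lam γ))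
      + 1 / (1 - th γ) * (1 / 2) * (f.2 ^ 2 / f.1)
      - th γ / (1 - th γ) * ξ * f.2

/-- u(f,ξ), inverse relation to f = M(ρ,u,ξ) -/
def uf (γ : ℝ) (f : ℝ × ℝ) (ξ : ℝ) : ℝ := (f.2 / f.1 - th γ * ξ) / (1 - th γ)

/-- ρ(f,ξ), inverse relation to f = M(ρ,u,ξ) -/
def rf (γ κ : ℝ) (f : ℝ × ℝ) (ξ : ℝ) : ℝ :=
  ag γ κ ^ (-(2 / (γ - 1))) *
    (((f.2 / f.1 - ξ) / (1 - th γ)) ^ 2 + (f.1 / cgk γ κ) ^ (1 / lam γ)) ^ (1 / (γ - 1))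

/-- kinetic Riemann invariant ω₁(f,ξ) -/
def om1 (γ κ : ℝ) (f : ℝ × ℝ) (ξ : ℝ) : ℝ :=
  uf γ f ξ - ag γ κ * rf γ κ f ξ ^ th γ

/-- kinetic Riemann invariant ω₂(f,ξ) -/
def om2 (γ κ : ℝ) (f : ℝ × ℝ) (ξ : ℝ) : ℝ :=
  uf γ f ξ + ag γ κ * rf γ κ f ξ ^ th γ

/-- Υ_{l}(z) = ∫_1^z (y²-1)^l dy -/
def Ups (l z : ℝ) : ℝ := ∫ y in (1:ℝ)..z, (y ^ 2 - 1) ^ l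

/-- entropy kernel Φ(ρ,u,ξ,v) -/
def Phi (γ κ ρ u ξ v : ℝ) : ℝ :=
  let w1 := u - ag γ κ * ρ ^ th γ
  let w2 := u + ag γ κ * ρ ^ th γ
  if w1 < ξ ∧ ξ < w2 ∧ w1 < v ∧ v < w2 then
    (1 - th γ) ^ 2 / th γ * (cgk γ κ / Jl (lam γ)) * |ξ - v| ^ (2 * lam γ - 1) *
      Ups (lam γ - 1) (((ξ + v) * (w1 + w2) - 2 * (w1 * w2 + ξ * v)) / ((w2 - w1) * |ξ - v|))
  else 0

/-- kinetic entropy H_S(f,ξ) -/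
def HS (γ κ : ℝ) (S : ℝ → ℝ) (f : ℝ × ℝ) (ξ : ℝ) : ℝ :=
  if f = 0 then 0 else ∫ v : ℝ, Phi γ κ (rf γ κ f ξ) (uf γ f ξ) ξ v * S v

/-- kinetic invariant domain D̃_ξ -/
def Dtil (γ κ ωmin ωmax ξ : ℝ) : Set (ℝ × ℝ) :=
  {f | f ∈ Dset ∧ (f = 0 ∨
    (ωmin ≤ om1 γ κ f ξ ∧ om1 γ κ f ξ ≤ om2 γ κ f ξ ∧ om2 γ κ f ξ ≤ ωmax))}

/-- T_S(ρ,u) (subdifferential of η_S) -/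
def TS (γ κ : ℝ) (S : ℝ → ℝ) (ρ u : ℝ) : ℝ × ℝ :=
  ((1 / Jl (lam γ)) * ∫ z in (-1:ℝ)..1, (1 - z ^ 2) ^ lam γ *
      (S (u + ag γ κ * ρ ^ th γ * z)
        + (th γ * ag γ κ * ρ ^ th γ * z - u) * deriv S (u + ag γ κ * ρ ^ th γ * z)),
   (1 / Jl (lam γ)) * ∫ z in (-1:ℝ)..1, (1 - z ^ 2) ^ lam γ *
      deriv S (u + ag γ κ * ρ ^ th γ * z))

/-- inner product on ℝ² -/
def dot (a b : ℝ × ℝ) : ℝ := a.1 * b.1 + a.2 * b.2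

/-! For `f.1 > 0`, multiplying the conditions on `ω₁, ω₂` by `f.1` makes them read
`W f ≤ P f + (ξ - ωmin) f.1` and `W f ≤ -P f + (ωmax - ξ) f.1`, where `P f = f.1 (u - ξ)` is linear
and `W f = f.1 a_γ ρ^θ = √(P f ² + Q(f.1)²)` with `Q(x) = c^(-1/(2λ)) x^(1 + 1/(2λ))` convex and
nonnegative. Hence `W` is convex on the half-plane `f.1 ≥ 0` (it is the Euclidean norm of a linear
and a convex nonnegative component), and the two conditions cut out sublevel sets of convex
functions. On the line `f.1 = 0` they reduce to `|P f| ≤ ±P f`, i.e. to `f = 0`. -/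

lemma sqrt_sq_add_sq_add_le (x₁ y₁ x₂ y₂ : ℝ) :
    √((x₁ + x₂) ^ 2 + (y₁ + y₂) ^ 2) ≤ √(x₁ ^ 2 + y₁ ^ 2) + √(x₂ ^ 2 + y₂ ^ 2) := by
  simpa [Complex.norm_def, Complex.normSq_apply, sq] using norm_add_le (⟨x₁, y₁⟩ : ℂ) ⟨x₂, y₂⟩

lemma sqrt_sq_add_sq_mul (a x y : ℝ) (ha : 0 ≤ a) :
    √((a * x) ^ 2 + (a * y) ^ 2) = a * √(x ^ 2 + y ^ 2) := by
  rw [show (a * x) ^ 2 + (a * y) ^ 2 = a ^ 2 * (x ^ 2 + y ^ 2) by ring, Real.sqrt_mul (sq_nonneg a),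
    Real.sqrt_sq ha]

lemma ConvexOn.sqrt_linearMap_sq_add_sq {E : Type*} [AddCommGroup E] [Module ℝ E] {s : Set E}
    (p : E →ₗ[ℝ] ℝ) {q : E → ℝ} (hq : ConvexOn ℝ s q) (hq₀ : ∀ x ∈ s, 0 ≤ q x) :
    ConvexOn ℝ s fun x => √(p x ^ 2 + q x ^ 2) := by
  refine ⟨hq.1, fun x hx y hy a b ha hb hab => ?_⟩
  have hq_le : q (a • x + b • y) ≤ a * q x + b * q y := hq.2 hx hy ha hb hab
  have hq_nonneg : 0 ≤ q (a • x + b • y) := hq₀ _ (hq.1 hx hy ha hb hab)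
  calc √(p (a • x + b • y) ^ 2 + q (a • x + b • y) ^ 2)
      ≤ √((a * p x + b * p y) ^ 2 + (a * q x + b * q y) ^ 2) := by
        simp only [map_add, map_smul, smul_eq_mul]
        gcongr
    _ ≤ √((a * p x) ^ 2 + (a * q x) ^ 2) + √((b * p y) ^ 2 + (b * q y) ^ 2) :=
        sqrt_sq_add_sq_add_le _ _ _ _
    _ = a • √(p x ^ 2 + q x ^ 2) + b • √(p y ^ 2 + q y ^ 2) := by
        rw [sqrt_sq_add_sq_mul a _ _ ha, sqrt_sq_add_sq_mul b _ _ hb, smul_eq_mul, smul_eq_mul]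

lemma ConvexOn.convex_setOf_le_linearMap {E : Type*} [AddCommGroup E] [Module ℝ E] {s : Set E}
    {g : E → ℝ} (hg : ConvexOn ℝ s g) (ℓ : E →ₗ[ℝ] ℝ) : Convex ℝ {x ∈ s | g x ≤ ℓ x} := by
  simpa only [Pi.sub_apply, sub_nonpos] using (hg.sub (ℓ.concaveOn hg.1)).convex_le 0

section Parameters

variable {γ κ : ℝ}

lemma th_lt_one (hγ' : γ < 3) : th γ < 1 := by rw [th]; linarith

lemma lam_pos (hγ : 1 < γ) (hγ' : γ < 3) : 0 < lam γ := by
  have : 1 / 2 < 1 / (γ - 1) := one_div_lt_one_div_of_lt (by linarith) (by linarith)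
  rw [lam]
  linarith

lemma ag_pos (hκ : 0 < κ) (hγ : 1 < γ) : 0 < ag γ κ := by
  have : 0 < √(γ * κ) := Real.sqrt_pos.2 (by positivity)
  have : 0 < γ - 1 := by linarith
  rw [ag]
  positivity

lemma Jl_pos (hγ : 1 < γ) (hγ' : γ < 3) : 0 < Jl (lam γ) := by
  have hcont : Continuous fun z : ℝ => (1 - z ^ 2) ^ lam γ :=
    (continuous_const.sub (continuous_pow 2)).rpow_const fun _ => Or.inr (lam_pos hγ hγ').le
  refine intervalIntegral.intervalIntegral_pos_of_pos_on (hcont.intervalIntegrable _ _)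
    (fun z hz => Real.rpow_pos_of_pos ?_ _) (by norm_num)
  nlinarith [hz.1, hz.2]

lemma cgk_pos (hκ : 0 < κ) (hγ : 1 < γ) (hγ' : γ < 3) : 0 < cgk γ κ :=
  div_pos (Real.rpow_pos_of_pos (ag_pos hκ hγ) _) (Jl_pos hγ hγ')

end Parameters

def relMomentum (γ ξ : ℝ) : ℝ × ℝ →ₗ[ℝ] ℝ :=
  (1 - th γ)⁻¹ • (LinearMap.snd ℝ ℝ ℝ - ξ • LinearMap.fst ℝ ℝ ℝ)

def restSoundTerm (γ κ x : ℝ) : ℝ := cgk γ κ ^ (-(1 / (2 * lam γ))) * x ^ (1 + 1 / (2 * lam γ))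

def weightedSoundSpeed (γ κ ξ : ℝ) (f : ℝ × ℝ) : ℝ :=
  √(relMomentum γ ξ f ^ 2 + restSoundTerm γ κ f.1 ^ 2)

section Invariants

variable {γ κ : ℝ}

lemma relMomentum_apply (γ ξ : ℝ) (f : ℝ × ℝ) :
    relMomentum γ ξ f = (1 - th γ)⁻¹ * (f.2 - ξ * f.1) := by
  simp [relMomentum]

lemma restSoundTerm_sq (hκ : 0 < κ) (hγ : 1 < γ) (hγ' : γ < 3) {x : ℝ} (hx : 0 ≤ x) :
    restSoundTerm γ κ x ^ 2 = x ^ 2 * (x / cgk γ κ) ^ (1 / lam γ) := by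
  have hl := lam_pos hγ hγ'
  have hc := cgk_pos hκ hγ hγ'
  have hpow : ∀ {y : ℝ}, 0 ≤ y → ∀ e : ℝ, (y ^ e) ^ 2 = y ^ (2 * e) := fun hy e => by
    rw [← Real.rpow_natCast, ← Real.rpow_mul hy, mul_comm]
    norm_num
  rw [restSoundTerm, mul_pow, hpow hc.le, hpow hx, Real.div_rpow hx hc.le,
    show 2 * (1 + 1 / (2 * lam γ)) = 2 + 1 / lam γ by field_simp,
    Real.rpow_add' hx (by positivity), show 2 * -(1 / (2 * lam γ)) = -(1 / lam γ) by field_simp,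
    Real.rpow_neg hc.le]
  norm_cast
  field_simp

lemma convexOn_restSoundTerm (hκ : 0 < κ) (hγ : 1 < γ) (hγ' : γ < 3) :
    ConvexOn ℝ (Ici 0) (restSoundTerm γ κ) := by
  have hl := lam_pos hγ hγ'
  exact (convexOn_rpow (by simp; positivity)).smul
    (Real.rpow_nonneg (cgk_pos hκ hγ hγ').le _)

lemma convexOn_weightedSoundSpeed (hκ : 0 < κ) (hγ : 1 < γ) (hγ' : γ < 3) (ξ : ℝ) :
    ConvexOn ℝ {f : ℝ × ℝ | 0 ≤ f.1} (weightedSoundSpeed γ κ ξ) :=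
  ConvexOn.sqrt_linearMap_sq_add_sq (relMomentum γ ξ)
    ((convexOn_restSoundTerm hκ hγ hγ').comp_linearMap (LinearMap.fst ℝ ℝ ℝ))
    fun _ hf => mul_nonneg (Real.rpow_nonneg (cgk_pos hκ hγ hγ').le _) (Real.rpow_nonneg hf _)

lemma ag_mul_rf_rpow_th (hκ : 0 < κ) (hγ : 1 < γ) (hγ' : γ < 3) (ξ : ℝ) {f : ℝ × ℝ}
    (hf : 0 ≤ f.1) :
    ag γ κ * rf γ κ f ξ ^ th γ =
      √(((f.2 / f.1 - ξ) / (1 - th γ)) ^ 2 + (f.1 / cgk γ κ) ^ (1 / lam γ)) := by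
  have ha := ag_pos hκ hγ
  have hB : 0 ≤ ((f.2 / f.1 - ξ) / (1 - th γ)) ^ 2 + (f.1 / cgk γ κ) ^ (1 / lam γ) :=
    add_nonneg (sq_nonneg _) (Real.rpow_nonneg (div_nonneg hf (cgk_pos hκ hγ hγ').le) _)
  have hγ₁ : γ - 1 ≠ 0 := by linarith
  rw [rf, Real.mul_rpow (Real.rpow_nonneg ha.le _) (Real.rpow_nonneg hB _),
    ← Real.rpow_mul ha.le, ← Real.rpow_mul hB, Real.sqrt_eq_rpow,
    show -(2 / (γ - 1)) * th γ = -1 by rw [th]; field_simp,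
    show 1 / (γ - 1) * th γ = 1 / 2 by rw [th]; field_simp,
    Real.rpow_neg_one, mul_inv_cancel_left₀ ha.ne']

lemma mul_ag_mul_rf_rpow_th (hκ : 0 < κ) (hγ : 1 < γ) (hγ' : γ < 3) (ξ : ℝ) {f : ℝ × ℝ}
    (hf : 0 < f.1) :
    f.1 * (ag γ κ * rf γ κ f ξ ^ th γ) = weightedSoundSpeed γ κ ξ f := by
  have hθ : 1 - th γ ≠ 0 := (sub_pos.2 (th_lt_one hγ')).ne'
  rw [ag_mul_rf_rpow_th hκ hγ hγ' ξ hf.le, weightedSoundSpeed, restSoundTerm_sq hκ hγ hγ' hf.le]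
  nth_rw 1 [← Real.sqrt_sq hf.le]
  rw [← Real.sqrt_mul (sq_nonneg _), relMomentum_apply]
  congr 1
  field_simp

lemma mul_uf (hγ' : γ < 3) (ξ : ℝ) {f : ℝ × ℝ} (hf : f.1 ≠ 0) :
    f.1 * uf γ f ξ = relMomentum γ ξ f + ξ * f.1 := by
  have hθ : 1 - th γ ≠ 0 := (sub_pos.2 (th_lt_one hγ')).ne'
  rw [uf, relMomentum_apply]
  field_simp
  ring

lemma riemannInvariants_mem_Icc_iff (hκ : 0 < κ) (hγ : 1 < γ) (hγ' : γ < 3)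
    (ξ ωmin ωmax : ℝ) {f : ℝ × ℝ} (hf : 0 < f.1) :
    (ωmin ≤ om1 γ κ f ξ ∧ om1 γ κ f ξ ≤ om2 γ κ f ξ ∧ om2 γ κ f ξ ≤ ωmax) ↔
      (weightedSoundSpeed γ κ ξ f ≤ relMomentum γ ξ f + (ξ - ωmin) * f.1 ∧
        weightedSoundSpeed γ κ ξ f ≤ -relMomentum γ ξ f + (ωmax - ξ) * f.1) := by
  have hs : 0 ≤ ag γ κ * rf γ κ f ξ ^ th γ := by
    rw [ag_mul_rf_rpow_th hκ hγ hγ' ξ hf.le]; positivity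
  have hW := mul_ag_mul_rf_rpow_th hκ hγ hγ' ξ hf
  have hu := mul_uf hγ' ξ hf.ne'
  rw [om1, om2, ← mul_le_mul_iff_right₀ hf, ← mul_le_mul_iff_right₀ hf (b := _ + _)]
  constructor
  · rintro ⟨h₁, -, h₂⟩
    constructor <;> nlinarith
  · rintro ⟨h₁, h₂⟩
    exact ⟨by nlinarith, by linarith, by nlinarith⟩

lemma weightedSoundSpeed_of_fst_eq_zero (hγ : 1 < γ) (hγ' : γ < 3) (ξ : ℝ) {f : ℝ × ℝ}
    (hf : f.1 = 0) : weightedSoundSpeed γ κ ξ f = |relMomentum γ ξ f| := by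
  have hl := lam_pos hγ hγ'
  rw [weightedSoundSpeed, restSoundTerm, hf, Real.zero_rpow (by positivity), mul_zero,
    zero_pow two_ne_zero, add_zero, Real.sqrt_sq_eq_abs]

lemma relMomentum_eq_zero_iff (hγ' : γ < 3) (ξ : ℝ) {f : ℝ × ℝ} (hf : f.1 = 0) :
    relMomentum γ ξ f = 0 ↔ f = 0 := by
  have hθ : 1 - th γ ≠ 0 := (sub_pos.2 (th_lt_one hγ')).ne'
  simp [relMomentum_apply, hf, hθ, Prod.ext_iff]

theorem Dtil_eq_inter (hκ : 0 < κ) (hγ : 1 < γ) (hγ' : γ < 3) (ξ ωmin ωmax : ℝ) :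
    Dtil γ κ ωmin ωmax ξ =
      {f ∈ {f : ℝ × ℝ | 0 ≤ f.1} | weightedSoundSpeed γ κ ξ f ≤
          (relMomentum γ ξ + (ξ - ωmin) • LinearMap.fst ℝ ℝ ℝ) f} ∩
        {f ∈ {f : ℝ × ℝ | 0 ≤ f.1} | weightedSoundSpeed γ κ ξ f ≤
          (-relMomentum γ ξ + (ωmax - ξ) • LinearMap.fst ℝ ℝ ℝ) f} := by
  ext f
  simp only [Dtil, Dset, mem_inter_iff, mem_ofPred_eq, LinearMap.add_apply, LinearMap.neg_apply,
    LinearMap.smul_apply, LinearMap.fst_apply, smul_eq_mul]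
  rcases lt_trichotomy f.1 0 with hf | hf | hf
  · have hf₀ : f ≠ 0 := fun h => by simp [h] at hf
    simp [hf.not_ge, hf.not_gt, hf₀]
  · rw [weightedSoundSpeed_of_fst_eq_zero hγ hγ' ξ hf, hf, ← relMomentum_eq_zero_iff hγ' ξ hf]
    simp only [lt_irrefl, le_refl, false_or, true_and, mul_zero, add_zero]
    constructor
    · rintro ⟨h, -⟩
      simp [h]
    · rintro ⟨h₁, h₂⟩
      have h : relMomentum γ ξ f = 0 := by
        linarith [le_abs_self (relMomentum γ ξ f), neg_abs_le (relMomentum γ ξ f)]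
      exact ⟨h, Or.inl h⟩
  · have hf₀ : f ≠ 0 := fun h => by simp [h] at hf
    simp only [hf, hf.le, hf₀, true_or, false_or, true_and]
    exact riemannInvariants_mem_Icc_iff hκ hγ hγ' ξ ωmin ωmax hf

end Invariants

theorem stmt12_general (γ κ : ℝ) (hκ : 0 < κ) (hγ : 1 < γ) (hγ' : γ < 3)
    (ξ ωmin ωmax : ℝ) :
    Convex ℝ (Dtil γ κ ωmin ωmax ξ) := by
  rw [Dtil_eq_inter hκ hγ hγ' ξ ωmin ωmax]
  have hW := convexOn_weightedSoundSpeed hκ hγ hγ' ξ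
  exact (hW.convex_setOf_le_linearMap _).inter (hW.convex_setOf_le_linearMap _)

theorem stmt12 (γ κ : ℝ) (hκ : 0 < κ) (hγ : 1 < γ) (hγ' : γ < 3)
    (ξ ωmin ωmax : ℝ) (hω : ωmin < ωmax) :
    Convex ℝ (Dtil γ κ ωmin ωmax ξ) :=
  stmt12_general γ κ hκ hγ hγ' ξ ωmin ωmax
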